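/- Let $(X_1,Y_1),\ldots,(X_{n+1},Y_{n+1})$ be exchangeable random pairs, let $s$ be a fixed measurable score function, and set $S_i = s(X_i,Y_i)$. Define the split conformal prediction set $\hat{C}(X_{n+1}) = \{y : s(X_{n+1},y) \le \hat{Q}\}$, where $\hat{Q}$ is the $\lceil (1-\alpha)(n+1)\rceil$-th smallest of $S_1,\ldots,S_n$. Then $\mathbb{P}[Y_{n+1} \in \hat{C}(X_{n+1})] \ge 1-\alpha$. -/

import Mathlib

/-!
Call the score `S j` small when fewer than `k` of the `n + 1` scores lie strictly below it.
Among any `m ≥ k` reals at least `k` are small (the first `k` in sorted order), so the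
probabilities that `S j` is small sum to at least `k`; by exchangeability they are all equal,
hence `S (n + 1)` is small with probability at least `k / (n + 1) ≥ 1 - α`. If `S (n + 1)` is
small, fewer than `k` calibration scores lie strictly below it, which says exactly that it is
at most their `k`-th smallest value.
-/

open MeasureTheory
open scoped ENNReal

/-- The `k`-th smallest value (1-indexed) of a finite family of reals. -/
noncomputable def kthSmallest {n : ℕ} (v : Fin n → ℝ) (k : ℕ) : ℝ :=
  ((Multiset.map v Finset.univ.val).sort (· ≤ ·)).getD (k - 1) 0

open Finset

section Rank

variable {ι α : Type*} [Fintype ι] [LinearOrder α]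

def strictRank (w : ι → α) (j : ι) : ℕ :=
  #{i | w i < w j}

theorem card_filter_comp_perm (σ : Equiv.Perm ι) (p : ι → Prop) [DecidablePred p] :
    #{i | p (σ i)} = #{i | p i} :=
  card_equiv σ (by simp)

theorem strictRank_comp_perm (w : ι → α) (σ : Equiv.Perm ι) (j : ι) :
    strictRank (w ∘ σ) j = strictRank w (σ j) :=
  card_filter_comp_perm σ (w · < w (σ j))

theorem Monotone.card_filter_lt_le_iff {n : ℕ} {u : Fin n → α} (hu : Monotone u) (p : Fin n)
    (t : α) : #{q | u q < t} ≤ p ↔ t ≤ u p := by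
  simpa using (Tuple.lt_card_lt_iff_apply_lt_of_monotone (j := p) (a := t) hu).not

theorem strictRank_sort_le {n : ℕ} (w : Fin n → α) (p : Fin n) :
    strictRank w (Tuple.sort w p) ≤ p := by
  rw [← strictRank_comp_perm]
  exact (Tuple.monotone_sort w).card_filter_lt_le_iff p _ |>.mpr le_rfl

theorem le_card_filter_strictRank_lt {m k : ℕ} (w : Fin m → α) (hk : k ≤ m) :
    k ≤ #{j | strictRank w j < k} := by
  have hinj : Set.InjOn (fun p : Fin k => Tuple.sort w (Fin.castLE hk p)) Set.univ :=
    ((Tuple.sort w).injective.comp (Fin.castLE_injective hk)).injOn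
  have hmaps : ∀ p ∈ (univ : Finset (Fin k)),
      Tuple.sort w (Fin.castLE hk p) ∈ ({j | strictRank w j < k} : Finset (Fin m)) := fun p _ => by
    simpa using (strictRank_sort_le w (Fin.castLE hk p)).trans_lt p.isLt
  simpa using card_le_card_of_injOn _ hmaps (by simpa using hinj)

theorem strictRank_last {n : ℕ} (w : Fin (n + 1) → α) :
    strictRank w (Fin.last n) = #{i : Fin n | w i.castSucc < w (Fin.last n)} := by
  rw [strictRank, card_filter, card_filter, Fin.sum_univ_castSucc]
  simp

end Rank

theorem kthSmallest_eq_apply_sort {n k : ℕ} (v : Fin n → ℝ) (hk : k - 1 < n) :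
    kthSmallest v k = v (Tuple.sort v ⟨k - 1, hk⟩) := by
  have hsort : (Multiset.map v univ.val).sort (· ≤ ·) = List.ofFn (v ∘ Tuple.sort v) := by
    rw [Fin.univ_val_map, ← Multiset.coe_eq_coe.mpr ((Tuple.sort v).ofFn_comp_perm v),
      Multiset.coe_sort, List.mergeSort_of_pairwise]
    simpa using (Tuple.monotone_sort v).sortedLE_ofFn.pairwise
  rw [kthSmallest, hsort, List.getD_eq_getElem _ _ (by simpa using hk), List.getElem_ofFn]
  rfl

theorem le_kthSmallest_iff {n k : ℕ} (v : Fin n → ℝ) (hk1 : 1 ≤ k) (hkn : k ≤ n) (t : ℝ) :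
    t ≤ kthSmallest v k ↔ #{i | v i < t} < k := by
  have hk : k - 1 < n := by omega
  have h := (Tuple.monotone_sort v).card_filter_lt_le_iff ⟨k - 1, hk⟩ t
  simp only [Function.comp_apply] at h
  rw [kthSmallest_eq_apply_sort v hk, ← h, card_filter_comp_perm (Tuple.sort v) (v · < t)]
  omega

theorem le_kthSmallest_of_strictRank_last_lt {n k : ℕ} (w : Fin (n + 1) → ℝ) (hkn : k ≤ n)
    (h : strictRank w (Fin.last n) < k) :
    w (Fin.last n) ≤ kthSmallest (fun i : Fin n => w i.castSucc) k := by
  rw [strictRank_last] at h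
  rw [le_kthSmallest_iff _ (by omega) (by omega)]
  exact h

section Exchangeable

variable {Ω ι β γ : Type*} [MeasurableSpace Ω] [MeasurableSpace β] [MeasurableSpace γ]

def Exchangeable (P : Measure Ω) (Z : Ω → ι → β) : Prop :=
  ∀ σ : Equiv.Perm ι, P.map (fun ω => Z ω ∘ σ) = P.map Z

theorem measurable_comp_right {κ : Type*} (e : κ → ι) : Measurable fun w : ι → β => w ∘ e :=
  measurable_pi_lambda _ fun i => measurable_pi_apply (e i)

theorem Exchangeable.comp {P : Measure Ω} {Z : Ω → ι → β} (h : Exchangeable P Z)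
    (hZ : Measurable Z) {g : β → γ} (hg : Measurable g) :
    Exchangeable P fun ω => g ∘ Z ω := by
  have hg' : Measurable fun w : ι → β => g ∘ w :=
    measurable_pi_lambda _ fun i => hg.comp (measurable_pi_apply i)
  intro σ
  calc P.map (fun ω => g ∘ Z ω ∘ σ) = (P.map fun ω => Z ω ∘ σ).map (g ∘ ·) :=
        (Measure.map_map hg' ((measurable_comp_right σ).comp hZ)).symm
    _ = (P.map Z).map (g ∘ ·) := by rw [h σ]
    _ = P.map fun ω => g ∘ Z ω := Measure.map_map hg' hZ

theorem Exchangeable.measure_preimage_comp_perm {P : Measure Ω} {Z : Ω → ι → β}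
    (h : Exchangeable P Z) (hZ : Measurable Z) {A : Set (ι → β)} (hA : MeasurableSet A)
    (σ : Equiv.Perm ι) : P {ω | Z ω ∘ σ ∈ A} = P (Z ⁻¹' A) := by
  rw [← Measure.map_apply hZ hA, ← h σ,
    Measure.map_apply (f := fun ω => Z ω ∘ σ) ((measurable_comp_right σ).comp hZ) hA]
  rfl

end Exchangeable

theorem lintegral_card_filter {Ω ι : Type*} [MeasurableSpace Ω] [Fintype ι] (P : Measure Ω)
    (p : ι → Ω → Prop) [∀ ω, DecidablePred (p · ω)] (hp : ∀ j, MeasurableSet {ω | p j ω}) :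
    ∫⁻ ω, (#{j | p j ω} : ℝ≥0∞) ∂P = ∑ j, P {ω | p j ω} := by
  have hind : ∀ ω, (#{j | p j ω} : ℝ≥0∞) = ∑ j, {ω | p j ω}.indicator 1 ω := fun ω => by
    rw [card_filter, Nat.cast_sum]
    exact sum_congr rfl fun j _ => by simp [Set.indicator_apply]
  simp_rw [hind]
  rw [lintegral_finsetSum _ fun j _ => measurable_one.indicator (hp j)]
  exact sum_congr rfl fun j _ => lintegral_indicator_one (hp j)

section StrictRank

variable {Ω α : Type*} [MeasurableSpace Ω] [MeasurableSpace α] [TopologicalSpace α]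
  [OpensMeasurableSpace α] [LinearOrder α] [OrderClosedTopology α] [SecondCountableTopology α]

theorem measurableSet_strictRank_lt {ι : Type*} [Fintype ι] (j : ι) (k : ℕ) :
    MeasurableSet {w : ι → α | strictRank w j < k} := by
  have : Measurable fun w : ι → α => strictRank w j := by
    simp_rw [strictRank, card_filter]
    exact Finset.measurable_sum _ fun i _ => Measurable.ite
      (measurableSet_lt (measurable_pi_apply i) (measurable_pi_apply j)) measurable_const
      measurable_const
  exact this measurableSet_Iio

theorem Exchangeable.measure_strictRank_lt_eq {ι : Type*} [Fintype ι] [DecidableEq ι]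
    {P : Measure Ω} {Z : Ω → ι → α}
    (h : Exchangeable P Z) (hZ : Measurable Z) (k : ℕ) (i j : ι) :
    P {ω | strictRank (Z ω) i < k} = P {ω | strictRank (Z ω) j < k} := by
  have := h.measure_preimage_comp_perm hZ (measurableSet_strictRank_lt j k) (Equiv.swap j i)
  simpa only [Set.preimage_ofPred_eq, Set.mem_ofPred_eq, strictRank_comp_perm,
    Equiv.swap_apply_left] using this

theorem Exchangeable.natCast_div_le_measure_strictRank_lt {m : ℕ} {P : Measure Ω}
    [IsProbabilityMeasure P] {Z : Ω → Fin m → α} (h : Exchangeable P Z) (hZ : Measurable Z)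
    {k : ℕ} (hk : k ≤ m) (j : Fin m) :
    (k : ℝ≥0∞) / m ≤ P {ω | strictRank (Z ω) j < k} := by
  refine ENNReal.div_le_of_le_mul' ?_
  calc (k : ℝ≥0∞) = ∫⁻ _, (k : ℝ≥0∞) ∂P := by simp
    _ ≤ ∫⁻ ω, (#{i | strictRank (Z ω) i < k} : ℝ≥0∞) ∂P :=
      lintegral_mono fun ω => Nat.cast_le.mpr (le_card_filter_strictRank_lt (Z ω) hk)
    _ = ∑ i, P {ω | strictRank (Z ω) i < k} :=
      lintegral_card_filter P _ fun i => hZ (measurableSet_strictRank_lt i k)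
    _ = m * P {ω | strictRank (Z ω) j < k} := by
      simp [h.measure_strictRank_lt_eq hZ k _ j]

end StrictRank

theorem ENNReal.ofReal_le_natCeil_mul_div (x : ℝ) {m : ℕ} (hm : m ≠ 0) :
    ENNReal.ofReal x ≤ (⌈x * m⌉₊ : ℝ≥0∞) / m := by
  rw [ENNReal.le_div_iff_mul_le (Or.inl (by simpa using hm)) (Or.inl (by simp)),
    ← ENNReal.ofReal_natCast, ← ENNReal.ofReal_natCast, ← ENNReal.ofReal_mul' (by positivity)]
  exact ENNReal.ofReal_le_ofReal (Nat.le_ceil _)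

/-- Marginal coverage of split conformal prediction: with scores `S_i = s(X_i, Y_i)` from
exchangeable pairs and `Q̂` the `⌈(1-α)(n+1)⌉`-th smallest calibration score (`+∞` if that
index exceeds `n`), the set `Ĉ(X_{n+1}) = {y : s(X_{n+1}, y) ≤ Q̂}` covers `Y_{n+1}` with
probability at least `1 - α`. -/
theorem split_conformal_marginal_coverage
    {Ω 𝒳 𝒴 : Type*} [MeasurableSpace Ω] [MeasurableSpace 𝒳] [MeasurableSpace 𝒴]
    (P : Measure Ω) [IsProbabilityMeasure P]
    (n : ℕ) (X : Fin (n + 1) → Ω → 𝒳) (Y : Fin (n + 1) → Ω → 𝒴)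
    (hmeas : ∀ i, Measurable (fun ω => (X i ω, Y i ω)))
    (hexch : ∀ σ : Equiv.Perm (Fin (n + 1)),
      Measure.map (fun ω => fun i => (X (σ i) ω, Y (σ i) ω)) P
        = Measure.map (fun ω => fun i => (X i ω, Y i ω)) P)
    (s : 𝒳 → 𝒴 → ℝ) (hs : Measurable (fun p : 𝒳 × 𝒴 => s p.1 p.2))
    (α : ℝ) (hα : α ∈ Set.Ioo (0 : ℝ) 1) :
    ENNReal.ofReal (1 - α) ≤
      P {ω | n < ⌈(1 - α) * (n + 1 : ℝ)⌉₊ ∨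
        s (X (Fin.last n) ω) (Y (Fin.last n) ω) ≤
          kthSmallest (fun i : Fin n => s (X i.castSucc ω) (Y i.castSucc ω))
            ⌈(1 - α) * (n + 1 : ℝ)⌉₊} := by
  set k := ⌈(1 - α) * (n + 1 : ℝ)⌉₊
  rcases lt_or_ge n k with hnk | hkn
  · simpa [hnk] using hα.1.le
  let S : Ω → Fin (n + 1) → ℝ := fun ω i => s (X i ω) (Y i ω)
  have hZ : Exchangeable P fun ω i => (X i ω, Y i ω) := hexch
  have hS : Exchangeable P S := hZ.comp (measurable_pi_lambda _ hmeas) hs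
  have hSmeas : Measurable S := measurable_pi_lambda _ fun i => hs.comp (hmeas i)
  calc ENNReal.ofReal (1 - α) ≤ (k : ℝ≥0∞) / (n + 1 : ℕ) := by
        simpa using ENNReal.ofReal_le_natCeil_mul_div (1 - α) n.succ_ne_zero
    _ ≤ P {ω | strictRank (S ω) (Fin.last n) < k} :=
        hS.natCast_div_le_measure_strictRank_lt hSmeas (by omega) _
    _ ≤ _ := measure_mono fun ω hω =>
        Or.inr (le_kthSmallest_of_strictRank_last_lt (S ω) hkn hω)
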